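/- arXiv:2409.17832 — 4 statements merged into one kernel-verified Lean document; each statement's English description precedes it below -/
import Mathlib

section
/- Let Q be a quiver on n vertices with skew-symmetric exchange matrix B. If Q is mutation-acyclic with connected underlying graph, and M_Q denotes the Markov invariant, then in the acyclic case (vertices ordered compatibly with arrows, upper-triangular entries b_{ij} ≥ 0 for i < j), we have M_Q = ∑_{i<j} b_{ij}² + ∑_O wt(O) where the second sum is over cycles O of the underlying graph with exactly one backward edge, and wt(O) is the product of the |b|-weights along the cycle. In particular, for a connected acyclic quiver on n vertices, M_Q ≥ n - 1. -/
/-!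
Write `U = 1 - L` with `L` strictly upper triangular, hence nilpotent, so that `V = ∑ Lᵐ` inverts
`U` and `det (X • U - Uᵀ) = charpoly (V * Uᵀ)`; its coefficient of `X ^ (n - 1)` is
`-trace (V * Uᵀ) = -∑ₘ ∑ᵢₖ (Lᵐ)ᵢₖ Uᵢₖ`. Expanding `Lᵐ` over increasing chains `i₀ < ⋯ < iₘ`,
the entry `U i₀ iₘ = -b i₀ iₘ` closes each chain into a cycle whose only backward edge is
`iₘ → i₀`; chains of length one give the terms `b i j ^ 2`. For the bound, all these weights are
nonnegative, and a connected graph on `n` vertices has at least `n - 1` edges, each contributing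
`b i j ^ 2 ≥ 1`.
-/

open Matrix Polynomial

open scoped Classical

namespace Matrix

variable {ι R : Type*}

theorem prod_chain_eq_zero_of_not_strictMono [LinearOrder ι] [CommMonoidWithZero R]
    {A : Matrix ι ι R} (hA : ∀ i j, j ≤ i → A i j = 0) {m : ℕ} {v : Fin (m + 1) → ι}
    (hv : ¬ StrictMono v) :
    ∏ j : Fin m, A (v j.castSucc) (v j.succ) = 0 := by
  obtain ⟨j, hj⟩ := not_forall.mp (mt Fin.strictMono_iff_lt_succ.mpr hv)
  exact Finset.prod_eq_zero (Finset.mem_univ j) (hA _ _ (not_lt.mp hj))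

variable [Fintype ι]

theorem sum_pow_apply_mul [DecidableEq ι] [CommSemiring R] (A C : Matrix ι ι R) (m : ℕ) :
    ∑ i, ∑ k, (A ^ m) i k * C i k =
      ∑ v : Fin (m + 1) → ι,
        (∏ j : Fin m, A (v j.castSucc) (v j.succ)) * C (v 0) (v (Fin.last m)) := by
  induction m generalizing C with
  | zero =>
    simp only [pow_zero, one_apply, ite_mul, one_mul, zero_mul, Finset.sum_ite_eq,
      Finset.mem_univ, if_true, Finset.univ_eq_empty, Finset.prod_empty]
    exact ((Equiv.funUnique (Fin 1) ι).sum_comp fun i => C i i).symm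
  | succ m ih =>
    have hsplit : ∀ i, ∑ k, (A ^ (m + 1)) i k * C i k =
        ∑ l, ∑ k, (A ^ m) l k * of (fun l k => A i l * C i k) l k := fun i => by
      simp only [pow_succ', mul_apply, of_apply, Finset.sum_mul]
      rw [Finset.sum_comm]
      exact Finset.sum_congr rfl fun l _ => Finset.sum_congr rfl fun k _ => by ring
    simp only [hsplit, ih]
    simp only [of_apply]
    rw [← (Fin.consEquiv fun _ => ι).sum_comp, Fintype.sum_prod_type]
    refine Finset.sum_congr rfl fun i _ => Finset.sum_congr rfl fun v _ => ?_
    simp only [Fin.consEquiv, Equiv.coe_fn_mk, Fin.prod_univ_succ, Fin.castSucc_zero,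
      Fin.cons_zero, ← Fin.succ_castSucc, Fin.cons_succ, Fin.cons_last]
    ring

theorem coeff_det_X_smul_sub_eq_neg_trace [DecidableEq ι] [CommRing R] [Nontrivial R]
    [Nonempty ι] {U V : Matrix ι ι R} (hUV : U * V = 1) (hU : U.det = 1) (A : Matrix ι ι R) :
    ((X : R[X]) • U.map C - A.map C).det.coeff (Fintype.card ι - 1) = -(V * A).trace := by
  have hfactor : (X : R[X]) • U.map C - A.map C = U.map C * charmatrix (V * A) := by
    rw [charmatrix, Matrix.mul_sub, RingHom.mapMatrix_apply, ← Matrix.map_mul, ← Matrix.mul_assoc,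
      hUV, Matrix.one_mul, scalar_apply]
    congr 1
    ext i j
    rw [mul_diagonal, smul_apply, map_apply, smul_eq_mul, mul_comm]
  rw [hfactor, det_mul, ← RingHom.mapMatrix_apply, ← RingHom.map_det, hU, C_1, one_mul,
    ← charpoly, trace_eq_neg_charpoly_coeff, neg_neg]

variable [LinearOrder ι]

theorem sum_pow_apply_mul_of_strictUpper [CommSemiring R] {A : Matrix ι ι R}
    (hA : ∀ i j, j ≤ i → A i j = 0) (C : Matrix ι ι R) (m : ℕ) :
    ∑ i, ∑ k, (A ^ m) i k * C i k =
      ∑ v ∈ Finset.univ.filter (fun v : Fin (m + 1) → ι => StrictMono v),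
        (∏ j : Fin m, A (v j.castSucc) (v j.succ)) * C (v 0) (v (Fin.last m)) := by
  rw [sum_pow_apply_mul, Finset.sum_filter_of_ne]
  intro v _ hne
  by_contra hv
  exact hne (by rw [prod_chain_eq_zero_of_not_strictMono hA hv, zero_mul])

theorem pow_card_eq_zero_of_strictUpper [CommSemiring R] {A : Matrix ι ι R}
    (hA : ∀ i j, j ≤ i → A i j = 0) :
    A ^ Fintype.card ι = 0 := by
  ext i k
  have hnone : ∀ v : Fin (Fintype.card ι + 1) → ι, ¬ StrictMono v := fun v hv => by
    simpa using Fintype.card_le_of_injective v hv.injective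
  have h := sum_pow_apply_mul_of_strictUpper hA (single i k 1) (Fintype.card ι)
  rw [Finset.filter_false_of_mem fun v _ => hnone v, Finset.sum_empty] at h
  simpa [single_apply, ite_and] using h

/-- Sum over increasing chains `i₀ < ⋯ < i_{m+1}` of `A i₀ i₁ ⋯ A i_m i_{m+1} * A i₀ i_{m+1}`:
the weights of the cycles whose only backward edge is the closing one `i_{m+1} → i₀`.
For `m = 0` these are the `2`-cycles, of weight `A i j ^ 2`. -/
def chainCycleSum [CommSemiring R] (A : Matrix ι ι R) (m : ℕ) : R :=
  ∑ v ∈ Finset.univ.filter (fun v : Fin (m + 2) → ι => StrictMono v),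
    (∏ j : Fin (m + 1), A (v j.castSucc) (v j.succ)) * A (v 0) (v (Fin.last (m + 1)))

theorem chainCycleSum_congr [CommSemiring R] {A A' : Matrix ι ι R}
    (h : ∀ i j, i < j → A i j = A' i j) (m : ℕ) :
    chainCycleSum A m = chainCycleSum A' m := by
  refine Finset.sum_congr rfl fun v hv => ?_
  have hv : StrictMono v := (Finset.mem_filter.mp hv).2
  rw [h _ _ (hv Fin.last_pos)]
  congr 1
  exact Finset.prod_congr rfl fun j _ => h _ _ (hv Fin.castSucc_lt_succ)

theorem chainCycleSum_zero [CommSemiring R] (A : Matrix ι ι R) :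
    chainCycleSum A 0 = ∑ i, ∑ j, if i < j then A i j ^ 2 else 0 := by
  rw [chainCycleSum, Finset.sum_filter, ← (piFinTwoEquiv fun _ => ι).symm.sum_comp,
    Fintype.sum_prod_type]
  refine Finset.sum_congr rfl fun i _ => Finset.sum_congr rfl fun j _ => ?_
  simp [Fin.strictMono_iff_lt_succ, sq, piFinTwoEquiv]

theorem chainCycleSum_nonneg [CommSemiring R] [PartialOrder R] [IsOrderedRing R]
    {A : Matrix ι ι R} (hA : ∀ i j, i < j → 0 ≤ A i j) (m : ℕ) :
    0 ≤ chainCycleSum A m := by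
  refine Finset.sum_nonneg fun v hv => ?_
  have hv : StrictMono v := (Finset.mem_filter.mp hv).2
  exact mul_nonneg (Finset.prod_nonneg fun j _ => hA _ _ (hv Fin.castSucc_lt_succ))
    (hA _ _ (hv Fin.last_pos))

theorem chainCycleSum_eq_sum_pos [CommSemiring R] [LinearOrder R] [IsOrderedRing R]
    {A : Matrix ι ι R} (hA : ∀ i j, i < j → 0 ≤ A i j) (m : ℕ) :
    chainCycleSum A m =
      ∑ v ∈ Finset.univ.filter (fun v : Fin (m + 2) → ι => StrictMono v ∧
          (∀ j : Fin (m + 1), 0 < A (v j.castSucc) (v j.succ)) ∧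
          0 < A (v 0) (v (Fin.last (m + 1)))),
        (∏ j : Fin (m + 1), A (v j.castSucc) (v j.succ)) * A (v 0) (v (Fin.last (m + 1))) := by
  rw [chainCycleSum, ← Finset.filter_filter]
  refine (Finset.sum_filter_of_ne fun v hv hne => ?_).symm
  have hv : StrictMono v := (Finset.mem_filter.mp hv).2
  refine ⟨fun j => (hA _ _ (hv Fin.castSucc_lt_succ)).lt_of_ne fun h => hne ?_,
    (hA _ _ (hv Fin.last_pos)).lt_of_ne fun h => hne ?_⟩
  · rw [Finset.prod_eq_zero (Finset.mem_univ j) h.symm, zero_mul]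
  · rw [← h, mul_zero]

theorem trace_geom_sum_mul_one_sub_transpose [CommRing R] {A : Matrix ι ι R}
    (hA : ∀ i j, j ≤ i → A i j = 0) (K : ℕ) :
    trace ((∑ m ∈ Finset.range (K + 1), A ^ m) * (1 - A)ᵀ) =
      Fintype.card ι - ∑ m ∈ Finset.range K, chainCycleSum A m := by
  have htrace : ∀ V W : Matrix ι ι R, trace (V * Wᵀ) = ∑ i, ∑ k, V i k * W i k := fun V W => by
    simp [trace, mul_apply]
  have hfirst : ∑ i, ∑ k, ((A ^ 0) i k) * (1 - A) i k = Fintype.card ι := by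
    simp [one_apply, hA _ _ le_rfl]
  have hchain : ∀ m, ∑ i, ∑ k, ((A ^ (m + 1)) i k) * (1 - A) i k = -chainCycleSum A m := by
    intro m
    rw [sum_pow_apply_mul_of_strictUpper hA, chainCycleSum, ← Finset.sum_neg_distrib]
    refine Finset.sum_congr rfl fun v hv => ?_
    have h0 : v 0 ≠ v (Fin.last (m + 1)) := ((Finset.mem_filter.mp hv).2 Fin.last_pos).ne
    simp [one_apply_ne h0]
  calc trace ((∑ m ∈ Finset.range (K + 1), A ^ m) * (1 - A)ᵀ)
      = ∑ m ∈ Finset.range (K + 1), ∑ i, ∑ k, (A ^ m) i k * (1 - A) i k := by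
        rw [htrace]
        simp only [sum_apply, Finset.sum_mul]
        exact Finset.sum_comm_cycle
    _ = _ := by
        simp only [Finset.sum_range_succ', hfirst, hchain, Finset.sum_neg_distrib]
        ring

theorem card_add_coeff_det_eq_sum_chainCycleSum [CommRing R] [Nontrivial R] [Nonempty ι]
    {U : Matrix ι ι R} (hUt : U.IsUpperTriangular) (hUd : ∀ i, U i i = 1) :
    Fintype.card ι + ((X : R[X]) • U.map C - Uᵀ.map C).det.coeff (Fintype.card ι - 1) =
      ∑ m ∈ Finset.range (Fintype.card ι + 1), chainCycleSum (Uᵀ - U) m := by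
  set L := 1 - U
  have hL : ∀ i j, j ≤ i → L i j = 0 := fun i j hji => by
    rcases hji.lt_or_eq with hji | rfl
    · simp [L, one_apply_ne hji.ne', hUt hji]
    · simp [L, hUd]
  have hU : U = 1 - L := by simp [L]
  have hinv : U * ∑ m ∈ Finset.range (Fintype.card ι + 2), L ^ m = 1 := by
    rw [hU, mul_neg_geom_sum, pow_eq_zero_of_le (by omega) (pow_card_eq_zero_of_strictUpper hL),
      sub_zero]
  have hdet : U.det = 1 := by
    rw [det_of_isUpperTriangular hUt]
    simp [hUd]
  rw [coeff_det_X_smul_sub_eq_neg_trace hinv hdet, hU, trace_geom_sum_mul_one_sub_transpose hL,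
    ← hU]
  have hLU : ∀ i j, i < j → L i j = (Uᵀ - U) i j := fun i j hij => by
    simp [L, one_apply_ne hij.ne, hUt hij]
  simp only [chainCycleSum_congr hLU]
  ring

end Matrix

theorem card_edgeSet_fromRel_ne_zero_le_sum_sq {ι : Type*} [Fintype ι] [LinearOrder ι]
    {B : Matrix ι ι ℤ} (hskew : Bᵀ = -B) :
    (Nat.card (SimpleGraph.fromRel fun i j => B i j ≠ 0).edgeSet : ℤ) ≤
      ∑ i, ∑ j, if i < j then B i j ^ 2 else 0 := by
  set G := SimpleGraph.fromRel fun i j => B i j ≠ 0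
  have hsymm : ∀ i j, B j i = -B i j := fun i j => by
    simpa using congrFun (congrFun hskew i) j
  have hedge : ∀ e ∈ G.edgeSet, e.inf < e.sup ∧ B e.inf e.sup ≠ 0 := by
    refine Sym2.ind fun a b hab => ?_
    obtain ⟨hne, hB⟩ : a ≠ b ∧ B a b ≠ 0 := by
      simpa [G, hsymm b a, or_self] using (SimpleGraph.mem_edgeSet G).mp hab
    rcases hne.lt_or_gt with h | h
    · simpa [h.le] using ⟨h, hB⟩
    · simpa [h.le, hsymm a b] using ⟨h, hB⟩
  let f : G.edgeSet → {p : ι × ι // p.1 < p.2 ∧ B p.1 p.2 ≠ 0} :=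
    fun e => ⟨(e.1.inf, e.1.sup), hedge e.1 e.2⟩
  have hf : Function.Injective f := fun e e' h => Subtype.ext <|
    Sym2.inf_eq_inf_and_sup_eq_sup.mp ⟨congrArg (·.1.1) h, congrArg (·.1.2) h⟩
  calc (Nat.card G.edgeSet : ℤ)
      ≤ Nat.card {p : ι × ι // p.1 < p.2 ∧ B p.1 p.2 ≠ 0} := by
        exact_mod_cast Nat.card_le_card_of_injective f hf
    _ = ∑ p : ι × ι, if p.1 < p.2 ∧ B p.1 p.2 ≠ 0 then 1 else 0 := by
        simp [Nat.card_eq_fintype_card, Fintype.card_subtype, Finset.sum_boole]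
    _ ≤ ∑ p : ι × ι, if p.1 < p.2 then B p.1 p.2 ^ 2 else 0 := by
        refine Finset.sum_le_sum fun p _ => ?_
        split_ifs with h h'
        · exact Int.add_one_le_of_lt (sq_pos_iff.mpr h.2)
        · exact absurd h.1 h'
        · exact sq_nonneg _
        · exact le_rfl
    _ = _ := Fintype.sum_prod_type _

theorem stmt9 (n : ℕ) (B U : Matrix (Fin n) (Fin n) ℤ)
    (hskew : Bᵀ = -B)
    (hcompat : ∀ i j : Fin n, i < j → 0 ≤ B i j)
    (hconn : (SimpleGraph.fromRel (fun i j => B i j ≠ 0)).Connected)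
    (hUt : ∀ i j : Fin n, j < i → U i j = 0) (hUd : ∀ i, U i i = 1)
    (hUB : Uᵀ - U = B)
    (M : ℤ)
    (hM : M = (n : ℤ) +
      (((Polynomial.X : Polynomial ℤ) • U.map Polynomial.C - Uᵀ.map Polynomial.C).det).coeff (n - 1)) :
    M = (∑ i : Fin n, ∑ j : Fin n, (if i < j then (B i j) ^ 2 else 0))
        + (∑ m ∈ Finset.range n,
            ∑ u ∈ Finset.univ.filter
              (fun u : Fin (m + 3) → Fin n => StrictMono u ∧
                (∀ j : Fin (m + 2), 0 < B (u j.castSucc) (u j.succ)) ∧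
                0 < B (u 0) (u (Fin.last (m + 2)))),
              (∏ j : Fin (m + 2), B (u j.castSucc) (u j.succ))
                * B (u 0) (u (Fin.last (m + 2))))
      ∧ (n : ℤ) - 1 ≤ M := by
  have : Nonempty (Fin n) := hconn.nonempty
  have hmarkov := card_add_coeff_det_eq_sum_chainCycleSum (R := ℤ) hUt hUd
  rw [Fintype.card_fin, hUB, ← hM, Finset.sum_range_succ', chainCycleSum_zero] at hmarkov
  refine ⟨?_, ?_⟩
  · rw [hmarkov, add_comm]
    congr 1
    exact Finset.sum_congr rfl fun m _ => chainCycleSum_eq_sum_pos hcompat (m + 1)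
  · have hedges := hconn.card_vert_le_card_edgeSet_add_one
    have hsq := card_edgeSet_fromRel_ne_zero_le_sum_sq hskew
    have hcycles := Finset.sum_nonneg fun m (_ : m ∈ Finset.range n) =>
      chainCycleSum_nonneg hcompat (m + 1)
    rw [Nat.card_eq_fintype_card, Fintype.card_fin] at hedges
    omega
end

section
/- For the Somos-4 quiver S with exchange matrix having arrows: 1 arrow v₁→v₂, 3 arrows v₂→v₃, 1 arrow v₃→v₄, 2 arrows v₃→v₁, 2 arrows v₄→v₂, 1 arrow v₁→v₄, and unipotent companion U with respect to the linear order v₁ < v₄ < v₂ < v₃, the Markov invariant M_S = 4 + (coefficient of t³ in det(tU - Uᵀ)) equals 0. -/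
/-!
For `det U = 1` we have `tU - Uᵀ = U (t - U⁻¹Uᵀ)`, so `det (tU - Uᵀ)` is the characteristic
polynomial of `U⁻¹Uᵀ`, whose `t^{n-1}`-coefficient is `-tr (U⁻¹Uᵀ)`. Since `tr (U⁻¹U) = n`, the
Markov invariant is `-tr (U⁻¹ (Uᵀ - U))`. For the Somos-4 quiver the companion `U` is read off from
the permuted exchange matrix, its inverse is explicit, and `U⁻¹ B_π` turns out to be traceless.
-/

open Matrix

namespace Matrix

open Polynomial

variable {n R : Type*} [CommRing R]

theorem eq_of_isUpperTriangular_of_transpose_sub_eq [LinearOrder n] {U S : Matrix n n R}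
    (hUt : U.IsUpperTriangular) (hUd : ∀ i, U i i = 1) (hUS : Uᵀ - U = S) :
    U = of fun i j => if i = j then 1 else if i < j then -S i j else 0 := by
  ext i j
  rcases lt_trichotomy i j with hij | rfl | hij
  · simp [hij, hij.ne, ← hUS, hUt hij]
  · simp [hUd]
  · simp [hij.ne', hij.not_gt, hUt hij]

variable [Fintype n] [DecidableEq n]

theorem X_smul_map_C_sub_transpose_eq_mul_charmatrix (U : Matrix n n R) (hU : IsUnit U.det) :
    (X : R[X]) • U.map C - Uᵀ.map C = U.map C * charmatrix (U⁻¹ * Uᵀ) := by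
  rw [charmatrix, RingHom.mapMatrix_apply, Matrix.mul_sub, ← Matrix.map_mul, ← Matrix.mul_assoc,
    mul_nonsing_inv U hU, Matrix.one_mul, scalar_apply, ← smul_one_eq_diagonal, Matrix.mul_smul,
    Matrix.mul_one]

theorem det_X_smul_map_C_sub_transpose (U : Matrix n n R) (hU : U.det = 1) :
    ((X : R[X]) • U.map C - Uᵀ.map C).det = (U⁻¹ * Uᵀ).charpoly := by
  rw [X_smul_map_C_sub_transpose_eq_mul_charmatrix U (by simp [hU]), det_mul,
    ← RingHom.mapMatrix_apply, ← RingHom.map_det, hU, map_one, one_mul, charpoly]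

theorem card_add_coeff_det_X_smul_map_C_sub_transpose [Nonempty n] (U : Matrix n n R)
    (hU : U.det = 1) :
    Fintype.card n + ((X : R[X]) • U.map C - Uᵀ.map C).det.coeff (Fintype.card n - 1)
      = -trace (U⁻¹ * (Uᵀ - U)) := by
  rw [det_X_smul_map_C_sub_transpose U hU, Matrix.mul_sub, trace_sub,
    nonsing_inv_mul U (by simp [hU]), trace_one, trace_eq_neg_charpoly_coeff]
  ring

end Matrix

theorem stmt13 (B U : Matrix (Fin 4) (Fin 4) ℤ)
    (hB : B = !![0, 1, -2, 1; -1, 0, 3, -2; 2, -3, 0, 1; -1, 2, -1, 0])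
    (π : Fin 4 → Fin 4) (hπ : π = ![0, 3, 1, 2])
    (hUt : ∀ i j : Fin 4, j < i → U i j = 0) (hUd : ∀ i, U i i = 1)
    (hUB : Uᵀ - U = B.submatrix π π) :
    (4 : ℤ) + (((Polynomial.X : Polynomial ℤ) • U.map Polynomial.C - Uᵀ.map Polynomial.C).det).coeff 3
      = 0 := by
  have hUt' : U.IsUpperTriangular := fun i j h => hUt i j h
  have hdet : U.det = 1 := by simp [det_of_isUpperTriangular hUt', hUd]
  have hU : U = !![1, -1, -1, 2; 0, 1, -2, 1; 0, 0, 1, -3; 0, 0, 0, 1] := by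
    rw [eq_of_isUpperTriangular_of_transpose_sub_eq hUt' hUd hUB, hB, hπ]
    decide
  have hUinv : U⁻¹ = !![1, 1, 3, 6; 0, 1, 2, 5; 0, 0, 1, 3; 0, 0, 0, 1] :=
    inv_eq_left_inv (by rw [hU]; decide)
  calc (4 : ℤ) + _ = -trace (U⁻¹ * (Uᵀ - U)) :=
        card_add_coeff_det_X_smul_map_C_sub_transpose U hdet
    _ = 0 := by
        rw [hUinv, hUB, hB, hπ]
        decide
end

section
/- Let B be an n×n skew-symmetric integer matrix, v a fixed index, ε = ±1, J the diagonal matrix with J_{vv} = -1 and J_{ww} = 1 otherwise, and E the matrix whose v-th column has entries E_{qv} = max(0, -ε B_{qv}) and all other entries 0. Set M = J + E. Then M B Mᵀ is again skew-symmetric, and its (p,q) entry for p, q ≠ v equals B_{pq} + max(0, -ε B_{pv})·B_{vq} + B_{pv}·max(0, -ε B_{vq}) — which is exactly the quiver mutation rule μ_v applied to B: (μ_v B)_{pq} = B_{pq} + sgn(B_{pv})·max(B_{pv}B_{vq}, 0) for p,q ≠ v, and (μ_v B)_{pv} = -B_{pv}. -/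
open Matrix

private lemma sgn_aux1 (b c : ℤ) : max 0 (-b) * c + b * max 0 c = b.sign * max (b*c) 0 := by
  rcases lt_trichotomy b 0 with hb|hb|hb <;> rcases le_or_gt c 0 with hc|hc
  · rw [max_eq_right (by linarith), max_eq_left hc, max_eq_left (by nlinarith),
      Int.sign_eq_neg_one_of_neg hb]; ring
  · rw [max_eq_right (by linarith), max_eq_right hc.le, max_eq_right (by nlinarith),
      Int.sign_eq_neg_one_of_neg hb]; ring
  · simp [hb]
  · simp [hb]
  · rw [max_eq_left (by linarith), max_eq_left hc, max_eq_right (by nlinarith),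
      Int.sign_eq_one_of_pos hb]; ring
  · rw [max_eq_left (by linarith), max_eq_right hc.le, max_eq_left (by nlinarith),
      Int.sign_eq_one_of_pos hb]; ring

private lemma sgn_aux2 (b c : ℤ) : max 0 b * c + b * max 0 (-c) = b.sign * max (b*c) 0 := by
  rcases lt_trichotomy b 0 with hb|hb|hb <;> rcases le_or_gt c 0 with hc|hc
  · rw [max_eq_left (by linarith), max_eq_right (by linarith), max_eq_left (by nlinarith),
      Int.sign_eq_neg_one_of_neg hb]; ring
  · rw [max_eq_left (by linarith), max_eq_left (by linarith), max_eq_right (by nlinarith),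
      Int.sign_eq_neg_one_of_neg hb]; ring
  · simp [hb]
  · simp [hb]
  · rw [max_eq_right (by linarith), max_eq_right (by linarith), max_eq_right (by nlinarith),
      Int.sign_eq_one_of_pos hb]; ring
  · rw [max_eq_right (by linarith), max_eq_left (by linarith), max_eq_left (by nlinarith),
      Int.sign_eq_one_of_pos hb]; ring

theorem stmt16 (n : ℕ) (B : Matrix (Fin n) (Fin n) ℤ) (hskew : Bᵀ = -B)
    (v : Fin n) (ε : ℤ) (hε : ε = 1 ∨ ε = -1)
    (J E M : Matrix (Fin n) (Fin n) ℤ)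
    (hJ : J = Matrix.diagonal (fun w => if w = v then -1 else 1))
    (hE : ∀ p q : Fin n, E p q = if q = v then max 0 (-ε * B p v) else 0)
    (hM : M = J + E) :
    (M * B * Mᵀ)ᵀ = -(M * B * Mᵀ) ∧
    (∀ p q : Fin n, p ≠ v → q ≠ v →
      (M * B * Mᵀ) p q
          = B p q + max 0 (-ε * B p v) * B v q + B p v * max 0 (-ε * B q v) ∧
      (M * B * Mᵀ) p q = B p q + (B p v).sign * max (B p v * B v q) 0) ∧
    (∀ p : Fin n, p ≠ v → (M * B * Mᵀ) p v = -(B p v)) := by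
  have hBskew : ∀ p q : Fin n, B q p = -(B p q) := by
    intro p q
    have := congrFun (congrFun hskew p) q
    simpa [Matrix.transpose_apply] using this
  have hBvv : B v v = 0 := by have := hBskew v v; omega
  have key : ∀ p q, (M * B * Mᵀ) p q =
      (if p = v then -1 else 1) * B p q * (if q = v then -1 else 1)
      + (if p = v then -1 else 1) * B p v * max 0 (-ε * B q v)
      + max 0 (-ε * B p v) * B v q * (if q = v then -1 else 1)
      + max 0 (-ε * B p v) * B v v * max 0 (-ε * B q v) := by
    have hMapp : ∀ p i : Fin n, M p i =
        (if i = p then (if p = v then -1 else 1) else 0)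
        + (if i = v then max 0 (-ε * B p v) else 0) := by
      intro p i
      simp [hM, hJ, hE, Matrix.diagonal_apply, eq_comm]
    intro p q
    have h1 : ∀ j, (M * B) p j =
        (if p = v then -1 else 1) * B p j + max 0 (-ε * B p v) * B v j := by
      intro j
      rw [Matrix.mul_apply]
      simp only [hMapp, add_mul, ite_mul, zero_mul, Finset.sum_add_distrib,
        Finset.sum_ite_eq, Finset.sum_ite_eq', Finset.mem_univ, if_true]
    rw [Matrix.mul_apply]
    simp only [h1, transpose_apply, hMapp, mul_add, add_mul, mul_ite, mul_zero,
      ite_mul, zero_mul, Finset.sum_add_distrib, Finset.sum_ite_eq, Finset.sum_ite_eq',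
      Finset.mem_univ, if_true]
    split_ifs <;> ring
  refine ⟨?_, ?_, ?_⟩
  · calc (M * B * Mᵀ)ᵀ = M * Bᵀ * Mᵀ := by
          simp [Matrix.transpose_mul, Matrix.mul_assoc]
      _ = -(M * B * Mᵀ) := by rw [hskew]; simp
  · intro p q hp hq
    have h1 : (M * B * Mᵀ) p q
        = B p q + max 0 (-ε * B p v) * B v q + B p v * max 0 (-ε * B q v) := by
      rw [key p q]
      simp [hp, hq, hBvv]
      ring
    refine ⟨h1, ?_⟩
    rw [h1]
    have hqv : B q v = -(B v q) := hBskew v q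
    rcases hε with h | h <;> subst h <;> rw [hqv]
    · have := sgn_aux1 (B p v) (B v q); simp only [neg_mul, one_mul, neg_neg] at this ⊢; linarith
    · have := sgn_aux2 (B p v) (B v q); simp only [neg_mul, one_mul, neg_neg] at this ⊢; linarith
  · intro p hp
    rw [key p v]
    simp [hp, hBvv]
end

section
/- Let Q be a finite directed graph (quiver), v a vertex, and O a cycle in the underlying simple graph K_Q containing an oriented path u → v → w. Then there exists a chordless cycle supported on a subset of the vertices of O that contains an oriented path u' → v → w' through v for some vertices u', w'. -/
open Matrix

private lemma mod_eq' (x n y : ℕ) (hy : y < n) (h : x = y ∨ x = n + y) : x % n = y := by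
  rcases h with rfl | rfl
  · exact Nat.mod_eq_of_lt hy
  · rw [Nat.add_mod_left]; exact Nat.mod_eq_of_lt hy

private lemma mod_small (x n : ℕ) (h : x < 2*n) :
    (x < n ∧ x % n = x) ∨ (n ≤ x ∧ x % n = x - n) := by
  rcases Nat.lt_or_ge x n with hl | hl
  · exact Or.inl ⟨hl, Nat.mod_eq_of_lt hl⟩
  · refine Or.inr ⟨hl, ?_⟩
    rw [Nat.mod_eq_sub_mod hl]
    exact Nat.mod_eq_of_lt (by omega)

private lemma finval_succ {N : ℕ} (t : Fin (N+3)) :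
    ((t + 1 : Fin (N+3)) : ℕ) = (t.val + 1) % (N+3) := by
  rw [Fin.val_add]; congr 2

private lemma finval_add_two {N : ℕ} (t : Fin (N+3)) :
    ((t + 2 : Fin (N+3)) : ℕ) = (t.val + 2) % (N+3) := by
  rw [Fin.val_add]; congr 2

private def arcW {V : Type*} {m : ℕ} (W : Fin (m+3) → V) (a : Fin (m+3)) (L : ℕ) :
    Fin (L - 3 + 3) → V :=
  fun t => W (a + ⟨t.val % (m+3), Nat.mod_lt _ (by omega)⟩)

private lemma arc_apply {V : Type*} {m : ℕ} (W : Fin (m+3) → V) (a : Fin (m+3)) (L : ℕ)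
    (t : Fin (L - 3 + 3)) :
    arcW W a L t = W ⟨(a.val + t.val) % (m+3), Nat.mod_lt _ (by omega)⟩ := by
  unfold arcW
  congr 1
  apply Fin.ext
  rw [Fin.val_add]
  exact Nat.add_mod_mod _ _ _

private lemma arc_eq {V : Type*} {m : ℕ} (W : Fin (m+3) → V) (a : Fin (m+3)) (L : ℕ)
    (t : Fin (L - 3 + 3)) (b : Fin (m+3))
    (h : (a.val + t.val) % (m+3) = b.val) : arcW W a L t = W b := by
  rw [arc_apply]
  congr 1
  exact Fin.ext h

private lemma arc_good {V : Type*} {m : ℕ} (A : V → V → Prop) (W : Fin (m+3) → V)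
    (hinj : Function.Injective W)
    (hadj : ∀ i : Fin (m+3), A (W i) (W (i+1)) ∨ A (W (i+1)) (W i))
    (a : Fin (m+3)) (L : ℕ) (hL3 : 3 ≤ L) (hLn : L < m+3)
    (hchord : A (W ⟨(a.val + (L-1)) % (m+3), Nat.mod_lt _ (by omega)⟩) (W a)
            ∨ A (W a) (W ⟨(a.val + (L-1)) % (m+3), Nat.mod_lt _ (by omega)⟩)) :
    Function.Injective (arcW W a L) ∧
    ∀ t : Fin (L-3+3), A (arcW W a L t) (arcW W a L (t+1)) ∨
      A (arcW W a L (t+1)) (arcW W a L t) := by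
  constructor
  · intro t s h
    rw [arc_apply, arc_apply] at h
    have h2 := hinj h
    have h3 : (a.val + t.val) % (m+3) = (a.val + s.val) % (m+3) := congrArg Fin.val h2
    have ht := t.isLt
    have hs := s.isLt
    have m1 := mod_small (a.val + t.val) (m+3) (by omega)
    have m2 := mod_small (a.val + s.val) (m+3) (by omega)
    apply Fin.ext
    rcases m1 with ⟨_, e1⟩ | ⟨_, e1⟩ <;> rcases m2 with ⟨_, e2⟩ | ⟨_, e2⟩ <;> omega
  · intro t
    have ht := t.isLt
    by_cases hc : t.val + 1 < L
    · have hval : ((t+1 : Fin (L-3+3)) : ℕ) = t.val + 1 := by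
        rw [finval_succ]
        exact mod_eq' _ _ _ (by omega) (Or.inl rfl)
      have e0 : arcW W a L t =
          W ⟨(a.val + t.val) % (m+3), Nat.mod_lt _ (by omega)⟩ := arc_apply W a L t
      have e1 : arcW W a L (t+1) =
          W (⟨(a.val + t.val) % (m+3), Nat.mod_lt _ (by omega)⟩ + 1) := by
        refine arc_eq W a L (t+1) _ ?_
        rw [hval, finval_succ]
        show (a.val + (t.val + 1)) % (m + 3) = ((a.val + t.val) % (m+3) + 1) % (m + 3)
        rw [Nat.mod_add_mod]
        congr 1
      rw [e0, e1]
      exact hadj _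
    · -- wrap-around: t.val = L - 1
      have hval : ((t+1 : Fin (L-3+3)) : ℕ) = 0 := by
        rw [finval_succ]
        exact mod_eq' _ _ _ (by omega) (Or.inr (by omega))
      have e1 : arcW W a L (t+1) = W a := by
        refine arc_eq W a L (t+1) _ ?_
        rw [hval, Nat.add_zero]
        exact Nat.mod_eq_of_lt a.isLt
      have e0 : arcW W a L t =
          W ⟨(a.val + (L-1)) % (m+3), Nat.mod_lt _ (by omega)⟩ := by
        refine arc_eq W a L t _ ?_
        show (a.val + t.val) % (m+3) = (a.val + (L-1)) % (m+3)
        congr 2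
        omega
      rw [e0, e1]
      exact hchord

private lemma aux18 {V : Type*} (A : V → V → Prop) (hirr : ∀ x, ¬ A x x) (v : V) :
    ∀ ℓ : ℕ, ∀ w : Fin (ℓ + 3) → V, Function.Injective w →
      (∀ i : Fin (ℓ + 3), A (w i) (w (i + 1)) ∨ A (w (i + 1)) (w i)) →
      ∀ i₀ : Fin (ℓ + 3), w (i₀ + 1) = v →
      A (w i₀) (w (i₀ + 1)) → A (w (i₀ + 1)) (w (i₀ + 2)) →
      ∃ (m : ℕ) (w' : Fin (m + 3) → V), Function.Injective w' ∧
        (∀ j, ∃ i, w' j = w i) ∧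
        (∀ j : Fin (m + 3), A (w' j) (w' (j + 1)) ∨ A (w' (j + 1)) (w' j)) ∧
        (∀ j k : Fin (m + 3), (A (w' j) (w' k) ∨ A (w' k) (w' j)) →
          (k = j + 1 ∨ j = k + 1)) ∧
        ∃ j₀ : Fin (m + 3), w' (j₀ + 1) = v ∧
          A (w' j₀) (w' (j₀ + 1)) ∧ A (w' (j₀ + 1)) (w' (j₀ + 2)) := by
  intro ℓ
  induction ℓ using Nat.strong_induction_on with
  | _ ℓ IH =>
    suffices H : ∀ w : Fin (ℓ + 3) → V, Function.Injective w →
        (∀ i : Fin (ℓ + 3), A (w i) (w (i + 1)) ∨ A (w (i + 1)) (w i)) →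
        w 1 = v → A (w 0) (w 1) → A (w 1) (w 2) →
        ∃ (m : ℕ) (w' : Fin (m + 3) → V), Function.Injective w' ∧
          (∀ j, ∃ i, w' j = w i) ∧
          (∀ j : Fin (m + 3), A (w' j) (w' (j + 1)) ∨ A (w' (j + 1)) (w' j)) ∧
          (∀ j k : Fin (m + 3), (A (w' j) (w' k) ∨ A (w' k) (w' j)) →
            (k = j + 1 ∨ j = k + 1)) ∧
          ∃ j₀ : Fin (m + 3), w' (j₀ + 1) = v ∧
            A (w' j₀) (w' (j₀ + 1)) ∧ A (w' (j₀ + 1)) (w' (j₀ + 2)) by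
      intro w hinj hadj i₀ hv hp1 hp2
      obtain ⟨m, w', h1, h2, h3, h4, h5⟩ :=
        H (fun t => w (t + i₀)) (hinj.comp (add_left_injective i₀))
          (by
            intro t
            have e : t + 1 + i₀ = t + i₀ + 1 := add_right_comm t 1 i₀
            show A (w (t + i₀)) (w (t + 1 + i₀)) ∨ A (w (t + 1 + i₀)) (w (t + i₀))
            rw [e]
            exact hadj (t + i₀))
          (by show w (1 + i₀) = v; rw [add_comm]; exact hv)
          (by show A (w (0 + i₀)) (w (1 + i₀)); rw [zero_add, add_comm]; exact hp1)
          (by show A (w (1 + i₀)) (w (2 + i₀)); rw [add_comm 1 i₀, add_comm 2 i₀]; exact hp2)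
      refine ⟨m, w', h1, ?_, h3, h4, h5⟩
      intro j
      obtain ⟨i, hi⟩ := h2 j
      exact ⟨i + i₀, hi⟩
    intro w hinj hadj hv hp1 hp2
    by_cases hch : ∀ j k : Fin (ℓ+3), (A (w j) (w k) ∨ A (w k) (w j)) → (k = j + 1 ∨ j = k + 1)
    · refine ⟨ℓ, w, hinj, fun j => ⟨j, rfl⟩, hadj, hch, 0, ?_, ?_, ?_⟩
      · rw [zero_add]; exact hv
      · rw [zero_add]; exact hp1
      · rw [zero_add]; exact hp2
    · push_neg at hch
      obtain ⟨j, k, hE, hnc⟩ := hch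
      have hzero : ((0 : Fin (ℓ+3)) : ℕ) = 0 := rfl
      have hone : ((1 : Fin (ℓ+3)) : ℕ) = 1 := by simp
      have htwo : ((2 : Fin (ℓ+3)) : ℕ) = 2 := by simp
      have hjk : j ≠ k := by
        rintro rfl
        rcases hE with h | h <;> exact hirr _ h
      -- order the chord endpoints
      obtain ⟨p, q, hpq, hEpq, hnc1, hnc2⟩ :
          ∃ p q : Fin (ℓ+3), p.val < q.val ∧ (A (w p) (w q) ∨ A (w q) (w p)) ∧
            q ≠ p + 1 ∧ p ≠ q + 1 := by
        rcases Nat.lt_or_ge j.val k.val with h | h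
        · exact ⟨j, k, h, hE, hnc.1, hnc.2⟩
        · have hlt : k.val < j.val := lt_of_le_of_ne h (fun hh => hjk (Fin.ext hh.symm))
          exact ⟨k, j, hlt, hE.symm, hnc.2, hnc.1⟩
      have hq := q.isLt
      have hp := p.isLt
      -- translate non-consecutiveness to ℕ
      have hnc1' : q.val ≠ (p.val + 1) % (ℓ+3) := by
        intro h
        exact hnc1 (Fin.ext (h.trans (finval_succ p).symm))
      have hnc2' : p.val ≠ (q.val + 1) % (ℓ+3) := by
        intro h
        exact hnc2 (Fin.ext (h.trans (finval_succ q).symm))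
      have hA1 : p.val + 2 ≤ q.val := by
        have m1 := mod_small (p.val + 1) (ℓ+3) (by omega)
        rcases m1 with ⟨_, e⟩ | ⟨_, e⟩ <;> omega
      have hA2 : ¬(p.val = 0 ∧ q.val = ℓ + 2) := by
        rintro ⟨h0, h1⟩
        have m1 := mod_small (q.val + 1) (ℓ+3) (by omega)
        rcases m1 with ⟨_, e⟩ | ⟨_, e⟩ <;> omega
      -- the generic step: build the shorter cycle and invoke IH
      have step : ∀ (a : Fin (ℓ+3)) (L : ℕ) (hL3 : 3 ≤ L) (hLn : L < ℓ+3),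
          (A (w ⟨(a.val + (L-1)) % (ℓ+3), Nat.mod_lt _ (by omega)⟩) (w a)
            ∨ A (w a) (w ⟨(a.val + (L-1)) % (ℓ+3), Nat.mod_lt _ (by omega)⟩)) →
          ∀ (x y z : ℕ) (b₀ b₁ b₂ : Fin (ℓ+3)), x < L →
          (x+1) % (L-3+3) = y → (x+2) % (L-3+3) = z →
          (a.val + x) % (ℓ+3) = b₀.val → (a.val + y) % (ℓ+3) = b₁.val →
          (a.val + z) % (ℓ+3) = b₂.val →
          w b₁ = v → A (w b₀) (w b₁) → A (w b₁) (w b₂) →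
          ∃ (m : ℕ) (w' : Fin (m + 3) → V), Function.Injective w' ∧
            (∀ j, ∃ i, w' j = w i) ∧
            (∀ j : Fin (m + 3), A (w' j) (w' (j + 1)) ∨ A (w' (j + 1)) (w' j)) ∧
            (∀ j k : Fin (m + 3), (A (w' j) (w' k) ∨ A (w' k) (w' j)) →
              (k = j + 1 ∨ j = k + 1)) ∧
            ∃ j₀ : Fin (m + 3), w' (j₀ + 1) = v ∧
              A (w' j₀) (w' (j₀ + 1)) ∧ A (w' (j₀ + 1)) (w' (j₀ + 2)) := by
        intro a L hL3 hLn hchord x y z b₀ b₁ b₂ hx hy hz hb0 hb1 hb2 hbv hq1 hq2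
        obtain ⟨hai, haa⟩ := arc_good A w hinj hadj a L hL3 hLn hchord
        have hxlt : x < L - 3 + 3 := by omega
        have hval1 : ((⟨x, hxlt⟩ + 1 : Fin (L-3+3)) : ℕ) = y := by
          rw [finval_succ]; exact hy
        have hval2 : ((⟨x, hxlt⟩ + 2 : Fin (L-3+3)) : ℕ) = z := by
          rw [finval_add_two]; exact hz
        have ev0 : arcW w a L ⟨x, hxlt⟩ = w b₀ := arc_eq _ _ _ _ _ hb0
        have ev1 : arcW w a L (⟨x, hxlt⟩ + 1) = w b₁ := by
          refine arc_eq _ _ _ _ _ ?_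
          rw [hval1]; exact hb1
        have ev2 : arcW w a L (⟨x, hxlt⟩ + 2) = w b₂ := by
          refine arc_eq _ _ _ _ _ ?_
          rw [hval2]; exact hb2
        obtain ⟨m, w', h1, h2, h3, h4, h5⟩ :=
          IH (L - 3) (by omega) (arcW w a L) hai haa ⟨x, hxlt⟩
            (ev1.trans hbv) (by rw [ev0, ev1]; exact hq1) (by rw [ev1, ev2]; exact hq2)
        refine ⟨m, w', h1, ?_, h3, h4, h5⟩
        intro u
        obtain ⟨i, hi⟩ := h2 u
        exact ⟨_, hi.trans (arc_apply w a L i)⟩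
      -- case analysis on the position of the chord relative to 0,1,2
      rcases Nat.lt_or_ge p.val 2 with hplt | hpge
      · rcases Nat.eq_zero_or_pos p.val with hp0 | hppos
        · -- Case B : p.val = 0, arc 0..q
          refine step p (q.val + 1) (by omega) (by omega) ?_ 0 1 2 0 1 2 (by omega)
            (mod_eq' _ _ _ (by omega) (by omega)) (mod_eq' _ _ _ (by omega) (by omega))
            (mod_eq' _ _ _ (Fin.is_lt _) (by omega)) (mod_eq' _ _ _ (Fin.is_lt _) (by omega))
            (mod_eq' _ _ _ (Fin.is_lt _) (by omega)) hv hp1 hp2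
          have e : (⟨(p.val + (q.val + 1 - 1)) % (ℓ+3), Nat.mod_lt _ (by omega)⟩ :
              Fin (ℓ+3)) = q := Fin.ext (mod_eq' _ _ _ (by omega) (by omega))
          rw [e]
          exact hEpq.symm
        · -- chord at v : p.val = 1
          have hp1v : p.val = 1 := by omega
          have hpone : p = 1 := Fin.ext (by omega)
          rcases hEpq with hD | hC
          · -- Case D : A (w p) (w q); arc q..p
            have hD1 : A (w 1) (w q) := by rw [← hpone]; exact hD
            refine step q (ℓ + 3 - q.val + 2) (by omega) (by omega) ?_
              (ℓ + 3 - q.val) (ℓ + 3 - q.val + 1) 0 0 1 q (by omega)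
              (mod_eq' _ _ _ (by omega) (by omega)) (mod_eq' _ _ _ (by omega) (by omega))
              (mod_eq' _ _ _ (Fin.is_lt _) (by omega)) (mod_eq' _ _ _ (Fin.is_lt _) (by omega))
              (mod_eq' _ _ _ (Fin.is_lt _) (by omega)) hv hp1 hD1
            have e : (⟨(q.val + (ℓ + 3 - q.val + 2 - 1)) % (ℓ+3), Nat.mod_lt _ (by omega)⟩ :
                Fin (ℓ+3)) = p := Fin.ext (mod_eq' _ _ _ (by omega) (by omega))
            rw [e]
            exact Or.inl hD
          · -- Case C : A (w q) (w p); arc p..q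
            have hC1 : A (w q) (w 1) := by rw [← hpone]; exact hC
            refine step p q.val (by omega) (by omega) ?_
              (q.val - 1) 0 1 q 1 2 (by omega)
              (mod_eq' _ _ _ (by omega) (by omega)) (mod_eq' _ _ _ (by omega) (by omega))
              (mod_eq' _ _ _ (Fin.is_lt _) (by omega)) (mod_eq' _ _ _ (Fin.is_lt _) (by omega))
              (mod_eq' _ _ _ (Fin.is_lt _) (by omega)) hv hC1 hp2
            have e : (⟨(p.val + (q.val - 1)) % (ℓ+3), Nat.mod_lt _ (by omega)⟩ :
                Fin (ℓ+3)) = q := Fin.ext (mod_eq' _ _ _ (by omega) (by omega))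
            rw [e]
            exact Or.inl hC
      · -- Case A : 2 ≤ p.val, arc q..p through 0,1,2
        refine step q (ℓ + 3 - q.val + p.val + 1) (by omega) (by omega) ?_
          (ℓ + 3 - q.val) (ℓ + 3 - q.val + 1) (ℓ + 3 - q.val + 2) 0 1 2 (by omega)
          (mod_eq' _ _ _ (by omega) (by omega)) (mod_eq' _ _ _ (by omega) (by omega))
          (mod_eq' _ _ _ (Fin.is_lt _) (by omega)) (mod_eq' _ _ _ (Fin.is_lt _) (by omega))
          (mod_eq' _ _ _ (Fin.is_lt _) (by omega)) hv hp1 hp2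
        have e : (⟨(q.val + (ℓ + 3 - q.val + p.val + 1 - 1)) % (ℓ+3),
            Nat.mod_lt _ (by omega)⟩ : Fin (ℓ+3)) = p :=
          Fin.ext (mod_eq' _ _ _ (by omega) (by omega))
        rw [e]
        exact hEpq

theorem stmt18 {V : Type*} [Fintype V] (A : V → V → Prop)
    (hirr : ∀ x, ¬ A x x) (h2 : ∀ x y, A x y → ¬ A y x)
    (v : V) (ℓ : ℕ) (w : Fin (ℓ + 3) → V) (hinj : Function.Injective w)
    (hadj : ∀ i : Fin (ℓ + 3), A (w i) (w (i + 1)) ∨ A (w (i + 1)) (w i))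
    (i₀ : Fin (ℓ + 3)) (hv : w (i₀ + 1) = v)
    (hp1 : A (w i₀) (w (i₀ + 1))) (hp2 : A (w (i₀ + 1)) (w (i₀ + 2))) :
    ∃ (m : ℕ) (w' : Fin (m + 3) → V), Function.Injective w' ∧
      (∀ j, ∃ i, w' j = w i) ∧
      (∀ j : Fin (m + 3), A (w' j) (w' (j + 1)) ∨ A (w' (j + 1)) (w' j)) ∧
      (∀ j k : Fin (m + 3), (A (w' j) (w' k) ∨ A (w' k) (w' j)) →
        (k = j + 1 ∨ j = k + 1)) ∧
      ∃ j₀ : Fin (m + 3), w' (j₀ + 1) = v ∧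
        A (w' j₀) (w' (j₀ + 1)) ∧ A (w' (j₀ + 1)) (w' (j₀ + 2)) := by
  exact aux18 A hirr v ℓ w hinj hadj i₀ hv hp1 hp2
end
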